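/- arXiv:2205.05945 — 3 statements merged into one kernel-verified Lean document; each statement's English description precedes it below -/
import Mathlib

section
/- For real numbers 0 < a < b, the integral of 1/sqrt((T²−a²)(b²−T²)) for T from a to b equals (1/b)·K(m) where m = 1 − a²/b². -/
/-!
Substitute `T = r(θ) := √(b² cos² θ + a² sin² θ)`, which decreases from `b` to `a` on `[0, π/2]`.
Then `T² - a² = (b² - a²) cos² θ` and `b² - T² = (b² - a²) sin² θ`, so the square root in the
integrand becomes `(b² - a²) sin θ cos θ`, which cancels against `|dT/dθ|`, leaving `1 / r(θ)`.
On the other side, `1 - (1 - a²/b²) sin² θ = (r(θ) / b)²` turns the integrand into `b / r(θ)`.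
-/

open Real MeasureTheory Set

/-- The distance from the origin to the point `(b cos θ, a sin θ)` of the ellipse with semi-axes
`b` and `a`. -/
noncomputable def ellipseRadius (a b θ : ℝ) : ℝ := √(b ^ 2 * cos θ ^ 2 + a ^ 2 * sin θ ^ 2)

section

variable {a b θ : ℝ}

theorem ellipseRadius_sq : ellipseRadius a b θ ^ 2 = b ^ 2 * cos θ ^ 2 + a ^ 2 * sin θ ^ 2 :=
  sq_sqrt (by positivity)

theorem ellipseRadius_zero (hb : 0 ≤ b) : ellipseRadius a b 0 = b := by
  simp [ellipseRadius, sqrt_sq hb]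

theorem ellipseRadius_pi_div_two (ha : 0 ≤ a) : ellipseRadius a b (π / 2) = a := by
  simp [ellipseRadius, sqrt_sq ha]

theorem ellipseRadius_nonneg : 0 ≤ ellipseRadius a b θ := sqrt_nonneg _

theorem ellipseRadius_pos (hb : b ≠ 0) (hθ : 0 < cos θ) : 0 < ellipseRadius a b θ :=
  sqrt_pos.2 (by positivity)

theorem continuous_ellipseRadius : Continuous (ellipseRadius a b) := by
  unfold ellipseRadius
  fun_prop

theorem hasDerivAt_ellipseRadius (hθ : ellipseRadius a b θ ≠ 0) :
    HasDerivAt (ellipseRadius a b) ((a ^ 2 - b ^ 2) * sin θ * cos θ / ellipseRadius a b θ) θ := by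
  have hrad : HasDerivAt (fun θ => b ^ 2 * cos θ ^ 2 + a ^ 2 * sin θ ^ 2)
      (2 * ((a ^ 2 - b ^ 2) * sin θ * cos θ)) θ :=
    ((((hasDerivAt_cos θ).fun_pow 2).const_mul (b ^ 2)).fun_add
      (((hasDerivAt_sin θ).fun_pow 2).const_mul (a ^ 2))).congr_deriv (by push_cast; ring)
  have hne : b ^ 2 * cos θ ^ 2 + a ^ 2 * sin θ ^ 2 ≠ 0 := fun h => hθ (by simp [ellipseRadius, h])
  refine (hrad.sqrt hne).congr_deriv ?_
  unfold ellipseRadius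
  field_simp

theorem strictAntiOn_ellipseRadius (hab : a ^ 2 < b ^ 2) :
    StrictAntiOn (ellipseRadius a b) (Icc 0 (π / 2)) := by
  intro x hx y hy hxy
  have hsin : sin x < sin y :=
    strictMonoOn_sin ⟨by linarith [hx.1, pi_pos], hx.2⟩ ⟨by linarith [hy.1, pi_pos], hy.2⟩ hxy
  have hsin_sq : sin x ^ 2 < sin y ^ 2 :=
    pow_lt_pow_left₀ hsin (sin_nonneg_of_nonneg_of_le_pi hx.1 (by linarith [hx.2, pi_pos]))
      two_ne_zero
  apply lt_of_pow_lt_pow_left₀ 2 ellipseRadius_nonneg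
  rw [ellipseRadius_sq, ellipseRadius_sq, cos_sq', cos_sq']
  nlinarith [mul_lt_mul_of_pos_left hsin_sq (sub_pos.2 hab)]

theorem ellipseRadius_sq_sub_mul_sub_sq :
    (ellipseRadius a b θ ^ 2 - a ^ 2) * (b ^ 2 - ellipseRadius a b θ ^ 2) =
      ((b ^ 2 - a ^ 2) * sin θ * cos θ) ^ 2 := by
  have hcos : ellipseRadius a b θ ^ 2 - a ^ 2 = (b ^ 2 - a ^ 2) * cos θ ^ 2 := by
    rw [ellipseRadius_sq]
    linear_combination a ^ 2 * sin_sq_add_cos_sq θ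
  have hsin : b ^ 2 - ellipseRadius a b θ ^ 2 = (b ^ 2 - a ^ 2) * sin θ ^ 2 := by
    rw [ellipseRadius_sq]
    linear_combination (-b ^ 2) * sin_sq_add_cos_sq θ
  rw [hcos, hsin]
  ring

theorem abs_deriv_ellipseRadius_mul_one_div_sqrt (hab : a ^ 2 < b ^ 2) (hθ : θ ∈ Ioo 0 (π / 2)) :
    |(a ^ 2 - b ^ 2) * sin θ * cos θ / ellipseRadius a b θ| *
        (1 / √((ellipseRadius a b θ ^ 2 - a ^ 2) * (b ^ 2 - ellipseRadius a b θ ^ 2))) =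
      1 / ellipseRadius a b θ := by
  have hsin : 0 < sin θ := sin_pos_of_pos_of_lt_pi hθ.1 (by linarith [hθ.2, pi_pos])
  have hcos : 0 < cos θ := cos_pos_of_mem_Ioo ⟨by linarith [hθ.1, pi_pos], hθ.2⟩
  have hba : 0 < b ^ 2 - a ^ 2 := sub_pos.2 hab
  have hc : 0 < (b ^ 2 - a ^ 2) * sin θ * cos θ := by positivity
  have hb : b ≠ 0 := by rintro rfl; nlinarith [sq_nonneg a]
  have hr : 0 < ellipseRadius a b θ := ellipseRadius_pos hb hcos
  have hneg : (a ^ 2 - b ^ 2) * sin θ * cos θ = -((b ^ 2 - a ^ 2) * sin θ * cos θ) := by ring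
  rw [ellipseRadius_sq_sub_mul_sub_sq, sqrt_sq hc.le, hneg, neg_div, abs_neg,
    abs_of_pos (div_pos hc hr)]
  field_simp

theorem one_div_sqrt_one_sub_mul_sin_sq_eq_div_ellipseRadius (hb : 0 < b) :
    1 / √(1 - (1 - a ^ 2 / b ^ 2) * sin θ ^ 2) = b / ellipseRadius a b θ := by
  have : 1 - (1 - a ^ 2 / b ^ 2) * sin θ ^ 2 = (ellipseRadius a b θ / b) ^ 2 := by
    rw [div_pow, ellipseRadius_sq, cos_sq']
    field_simp
    ring
  rw [this, sqrt_sq (div_nonneg ellipseRadius_nonneg hb.le), one_div_div]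

-- Valid for every `g`, integrable or not: this is what handles the endpoint singularities.
theorem integral_Ioo_eq_integral_comp_ellipseRadius (ha : 0 ≤ a) (hab : a < b) (g : ℝ → ℝ) :
    ∫ T in Ioo a b, g T =
      ∫ θ in Ioo 0 (π / 2),
        |(a ^ 2 - b ^ 2) * sin θ * cos θ / ellipseRadius a b θ| * g (ellipseRadius a b θ) := by
  have hb : 0 < b := ha.trans_lt hab
  have hsq : a ^ 2 < b ^ 2 := pow_lt_pow_left₀ hab ha two_ne_zero
  have himage : ellipseRadius a b '' Ioo 0 (π / 2) = Ioo a b := by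
    rw [continuous_ellipseRadius.continuousOn.image_Ioo_of_strictAntiOn (by positivity)
      (strictAntiOn_ellipseRadius hsq), ellipseRadius_zero hb.le, ellipseRadius_pi_div_two ha]
  rw [← himage]
  refine integral_image_eq_integral_abs_deriv_smul measurableSet_Ioo (fun θ hθ => ?_)
    ((strictAntiOn_ellipseRadius hsq).injOn.mono Ioo_subset_Icc_self) g
  have hcos : 0 < cos θ := cos_pos_of_mem_Ioo ⟨by linarith [hθ.1, pi_pos], hθ.2⟩
  exact (hasDerivAt_ellipseRadius (ellipseRadius_pos hb.ne' hcos).ne').hasDerivWithinAt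

end

theorem stmt_1 (a b : ℝ) (ha : 0 < a) (hab : a < b) :
    ∫ T in a..b, 1 / Real.sqrt ((T ^ 2 - a ^ 2) * (b ^ 2 - T ^ 2)) =
      (1 / b) * ∫ θ in (0:ℝ)..(π / 2),
        1 / Real.sqrt (1 - (1 - a ^ 2 / b ^ 2) * Real.sin θ ^ 2) := by
  have hb : 0 < b := ha.trans hab
  have hsq : a ^ 2 < b ^ 2 := pow_lt_pow_left₀ hab ha.le two_ne_zero
  rw [intervalIntegral.integral_of_le hab.le, intervalIntegral.integral_of_le (by positivity),
    integral_Ioc_eq_integral_Ioo, integral_Ioc_eq_integral_Ioo,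
    integral_Ioo_eq_integral_comp_ellipseRadius ha.le hab, ← integral_const_mul]
  refine setIntegral_congr_fun measurableSet_Ioo fun θ hθ => ?_
  rw [abs_deriv_ellipseRadius_mul_one_div_sqrt hsq hθ,
    one_div_sqrt_one_sub_mul_sin_sq_eq_div_ellipseRadius hb]
  field_simp
end

section
/- For a real a > 0 and a nonzero real b, the integral of 1/sqrt((a²−T²)(b²+T²)) for T from −a to a equals (2/|b|)·K(m) where m = −a²/b² (a negative parameter). -/
/-! The substitution `T = a sin θ` turns `a² - T²` into `(a cos θ)²`, whose root cancels
the Jacobian `a cos θ`; what remains is `1 / √(b² + a² sin² θ)`, an even function of `θ`,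
and pulling `b²` out of the root gives `K(-a²/b²) / |b|` on `[0, π/2]`. -/

open Real intervalIntegral MeasureTheory Set

section

variable {E : Type*} [NormedAddCommGroup E] [NormedSpace ℝ E]

theorem intervalIntegral_eq_integral_sin_subst {a : ℝ} (ha : 0 ≤ a) (g : ℝ → E) :
    ∫ T in (-a)..a, g T = ∫ θ in (-(π / 2))..(π / 2), (a * cos θ) • g (a * sin θ) := by
  have hπ : -(π / 2) ≤ π / 2 := by linarith [pi_pos]
  have key := integral_Icc_deriv_smul_of_deriv_nonneg (f := fun θ => a * sin θ)
    (f' := fun θ => a * cos θ) (g := g) (by fun_prop)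
    (fun θ _ => (hasDerivAt_sin θ).const_mul a)
    (fun θ hθ => mul_nonneg ha (cos_pos_of_mem_Ioo hθ).le) hπ
  simp only [sin_neg, sin_pi_div_two, mul_neg, mul_one] at key
  rw [integral_of_le (by linarith), integral_of_le hπ, ← integral_Icc_eq_integral_Ioc,
    ← integral_Icc_eq_integral_Ioc, key]

theorem Function.Even.intervalIntegral_neg_eq_two_smul {f : ℝ → E} (hf : f.Even) (c : ℝ) :
    ∫ x in (-c)..c, f x = (2 : ℝ) • ∫ x in (0 : ℝ)..c, f x := by
  have hneg : ∫ x in (-c)..0, f x = ∫ x in (0 : ℝ)..c, f x := by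
    simpa only [hf _, neg_zero] using (integral_comp_neg (a := 0) (b := c) f).symm
  by_cases hint : IntervalIntegrable f volume 0 c
  · have hint' : IntervalIntegrable f volume (-c) 0 := by
      simpa only [hf _, neg_zero] using ((IntervalIntegrable.iff_comp_neg (by simp)).1 hint).symm
    rw [← integral_add_adjacent_intervals hint' hint, hneg, two_smul]
  · have h0 : (0 : ℝ) ∈ uIcc (-c) c :=
      mem_uIcc.2 ((le_total 0 c).imp (fun h => ⟨by linarith, h⟩) fun h => ⟨h, by linarith⟩)
    have hint' : ¬ IntervalIntegrable f volume (-c) c := fun h =>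
      hint (h.mono_set (uIcc_subset_uIcc h0 right_mem_uIcc))
    rw [integral_undef hint, integral_undef hint', smul_zero]

end

theorem mul_cos_mul_one_div_sqrt_sin_subst {a b θ : ℝ} (hc : 0 < a * cos θ) :
    a * cos θ * (1 / √((a ^ 2 - (a * sin θ) ^ 2) * (b ^ 2 + (a * sin θ) ^ 2))) =
      1 / √(b ^ 2 + a ^ 2 * sin θ ^ 2) := by
  have hcos : a ^ 2 - (a * sin θ) ^ 2 = (a * cos θ) ^ 2 := by
    linear_combination -a ^ 2 * sin_sq_add_cos_sq θ
  rw [hcos, sqrt_mul (sq_nonneg _), sqrt_sq hc.le, one_div, mul_inv, ← mul_assoc,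
    mul_inv_cancel₀ hc.ne', one_mul, mul_pow, one_div]

theorem sqrt_sq_add_sq_mul_eq_abs_mul_sqrt {a b : ℝ} (hb : b ≠ 0) (x : ℝ) :
    √(b ^ 2 + a ^ 2 * x) = |b| * √(1 - (-(a ^ 2 / b ^ 2)) * x) := by
  rw [← sqrt_sq_eq_abs, ← sqrt_mul (sq_nonneg b)]
  congr 1
  field_simp
  ring

theorem stmt_2 (a b : ℝ) (ha : 0 < a) (hb : b ≠ 0) :
    ∫ T in (-a)..a, 1 / Real.sqrt ((a ^ 2 - T ^ 2) * (b ^ 2 + T ^ 2)) =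
      (2 / |b|) * ∫ θ in (0:ℝ)..(π / 2),
        1 / Real.sqrt (1 - (-(a ^ 2 / b ^ 2)) * Real.sin θ ^ 2) := by
  have hπ : -(π / 2) ≤ π / 2 := by linarith [pi_pos]
  calc ∫ T in (-a)..a, 1 / √((a ^ 2 - T ^ 2) * (b ^ 2 + T ^ 2))
      = ∫ θ in (-(π / 2))..(π / 2), 1 / √(b ^ 2 + a ^ 2 * sin θ ^ 2) := by
        rw [intervalIntegral_eq_integral_sin_subst ha.le, integral_of_le hπ, integral_of_le hπ,
          integral_Ioc_eq_integral_Ioo, integral_Ioc_eq_integral_Ioo]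
        refine setIntegral_congr_fun measurableSet_Ioo fun θ hθ => ?_
        exact mul_cos_mul_one_div_sqrt_sin_subst (mul_pos ha (cos_pos_of_mem_Ioo hθ))
    _ = 2 * ∫ θ in (0 : ℝ)..(π / 2), 1 / √(b ^ 2 + a ^ 2 * sin θ ^ 2) :=
        Function.Even.intervalIntegral_neg_eq_two_smul (fun θ => by simp) _
    _ = 2 / |b| * ∫ θ in (0 : ℝ)..(π / 2), 1 / √(1 - (-(a ^ 2 / b ^ 2)) * sin θ ^ 2) := by
        rw [div_eq_mul_one_div 2 |b|, mul_assoc,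
          ← intervalIntegral.integral_const_mul (1 / |b|)]
        congr 1
        refine intervalIntegral.integral_congr fun θ _ => ?_
        rw [sqrt_sq_add_sq_mul_eq_abs_mul_sqrt hb, one_div_mul_one_div]
end

section
/- Let σ, Δ be reals with Δ < 0 and σ < 1. Define Δ̃ = (1/16)(σ² − Δ)((σ−2)² − Δ). Then Δ̃ > 0, and the quadratic f(c) = (1−σ)c² + 2·((σ²−Δ)/4)·c − (σ²−Δ)/4 has two real roots c₋ < 0 < c₊ satisfying c₋ < σ/2 < c₊ < 1/2; moreover c = c₋ = −(sqrt(Δ̃) + (σ²−Δ)/4)/(1−σ) satisfies c < 0, a := 1/(1−2c) ∈ (0,1), and d := −a·c > c. -/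
set_option maxHeartbeats 1000000 in
theorem stmt_10 (σ Δ : ℝ) (hΔ : Δ < 0) (hσ : σ < 1) :
    ∀ Δt : ℝ, Δt = (1 / 16) * (σ ^ 2 - Δ) * ((σ - 2) ^ 2 - Δ) →
    ∀ f : ℝ → ℝ,
      f = (fun c : ℝ => (1 - σ) * c ^ 2 + 2 * ((σ ^ 2 - Δ) / 4) * c - (σ ^ 2 - Δ) / 4) →
      0 < Δt ∧
      (∃ cm cp : ℝ, f cm = 0 ∧ f cp = 0 ∧ cm < 0 ∧ 0 < cp ∧
        cm < σ / 2 ∧ σ / 2 < cp ∧ cp < 1 / 2) ∧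
      ∀ c a d : ℝ,
        c = -(Real.sqrt Δt + (σ ^ 2 - Δ) / 4) / (1 - σ) →
        a = 1 / (1 - 2 * c) →
        d = -(a * c) →
        f c = 0 ∧ c < 0 ∧ a ∈ Set.Ioo (0:ℝ) 1 ∧ c < d := by
  intro Δt hΔt f hf
  have h1σ : (0:ℝ) < 1 - σ := by linarith
  have hS : (0:ℝ) < (σ ^ 2 - Δ) / 4 := by nlinarith [sq_nonneg σ]
  set S : ℝ := (σ ^ 2 - Δ) / 4 with hSdef
  have hΔt' : Δt = S ^ 2 + (1 - σ) * S := by rw [hΔt, hSdef]; ring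
  have hΔtpos : 0 < Δt := by nlinarith
  have hr2 : Real.sqrt Δt ^ 2 = Δt := Real.sq_sqrt hΔtpos.le
  have hr0 : 0 < Real.sqrt Δt := Real.sqrt_pos.mpr hΔtpos
  set r : ℝ := Real.sqrt Δt with hrdef
  clear_value S r
  have hrS : S < r := by nlinarith
  have hkey : (S + σ * (1 - σ) / 2) ^ 2 < Δt := by
    have hid : Δt - (S + σ * (1 - σ) / 2) ^ 2 = (1 - σ) ^ 2 * (-Δ) / 4 := by
      rw [hΔt', hSdef]; ring
    nlinarith [mul_pos (mul_pos h1σ h1σ) (neg_pos.mpr hΔ)]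
  have hX : S + σ * (1 - σ) / 2 < r := by nlinarith
  have hY : r < S + (1 - σ) / 2 := by nlinarith
  have hfm : f (-(r + S) / (1 - σ)) = 0 := by
    rw [hf]; field_simp; nlinarith [hr2, hΔt']
  refine ⟨hΔtpos, ⟨-(r + S) / (1 - σ), (r - S) / (1 - σ), hfm, ?_, ?_, ?_, ?_, ?_, ?_⟩, ?_⟩
  · rw [hf]; field_simp; nlinarith [hr2, hΔt']
  · exact div_neg_of_neg_of_pos (by nlinarith) h1σ
  · exact div_pos (by linarith) h1σ
  · rw [div_lt_iff₀ h1σ]; nlinarith [sq_nonneg (r + S + σ * (1 - σ) / 2)]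
  · rw [lt_div_iff₀ h1σ]; nlinarith
  · rw [div_lt_iff₀ h1σ]; nlinarith
  · intro c a d hc ha hd
    have hceq : c = -(r + S) / (1 - σ) := hc
    have hc0 : c < 0 := hceq ▸ div_neg_of_neg_of_pos (by nlinarith) h1σ
    have h2c : (1:ℝ) < 1 - 2 * c := by linarith
    have ha0 : 0 < a := by rw [ha]; positivity
    have ha1 : a < 1 := by rw [ha]; rw [div_lt_one (by linarith)]; linarith
    refine ⟨hceq ▸ hfm, hc0, ⟨ha0, ha1⟩, ?_⟩
    have : 0 < -(a * c) := by nlinarith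
    linarith [hd ▸ this]
end
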